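/- Along the lifted observer kinematics Q̂̇ = (Ω₀+q̂)^× Q̂ + (Q̂π̂)^× Q̂, q̂̇ = (Q̂π̂)^×(Ω₀+q̂) + Q̂θ̂, the projected estimates R̂ = R₀Q̂ and Ω̂ = Q̂ᵀ(Ω₀+q̂) satisfy R̂̇ = R̂(Ω̂ + π̂)^× and Ω̂̇ = θ̂. -/

import Mathlib

open Matrix

noncomputable section

abbrev Mat3 := Matrix (Fin 3) (Fin 3) ℝ
abbrev Vec3 := Fin 3 → ℝ

/-- `Q` is a rotation matrix: orthogonal with determinant 1. -/
def IsSO3 (Q : Mat3) : Prop := Qᵀ * Q = 1 ∧ Q.det = 1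

/-- skew-symmetric matrix `v^×` of a vector. -/
def hat (v : Vec3) : Mat3 := !![0, -v 2, v 1; v 2, 0, -v 0; -v 1, v 0, 0]

/-- inverse of `hat` on skew-symmetric matrices. -/
def vee (W : Mat3) : Vec3 := ![W 2 1, W 0 2, W 1 0]

/-- cross product on ℝ³. -/
def cross (u v : Vec3) : Vec3 :=
  ![u 1 * v 2 - u 2 * v 1, u 2 * v 0 - u 0 * v 2, u 0 * v 1 - u 1 * v 0]

/-- semidirect product on SE(3): (A,a)·(B,b) = (AB, a + Ab). -/
def semul (X Y : Mat3 × Vec3) : Mat3 × Vec3 := (X.1 * Y.1, X.2 + X.1 *ᵥ Y.2)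

lemma hat_mulVec (v u : Vec3) : hat v *ᵥ u = cross v u := by
  ext i; fin_cases i <;>
    simp [hat, cross, mulVec, dotProduct, Fin.sum_univ_three] <;> ring

lemma crossSelf (v : Vec3) : cross v v = 0 := by
  ext i; fin_cases i <;> simp [cross] <;> ring

lemma hat_transpose (v : Vec3) : (hat v)ᵀ = -hat v := by
  ext i j; fin_cases i <;> fin_cases j <;> simp [hat]

lemma hat_add (u v : Vec3) : hat (u + v) = hat u + hat v := by
  ext i j; fin_cases i <;> fin_cases j <;> simp [hat] <;> ring

lemma cross_poly (A : Mat3) (u v : Vec3) :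
    Aᵀ *ᵥ cross (A *ᵥ u) (A *ᵥ v) = A.det • cross u v := by
  ext i; fin_cases i <;>
    simp [cross, mulVec, dotProduct, Fin.sum_univ_three, Matrix.det_fin_three,
      Matrix.transpose_apply] <;> ring

lemma mulmul (Q : Mat3) (hQ : IsSO3 Q) (x : Vec3) : Q *ᵥ (Qᵀ *ᵥ x) = x := by
  rw [mulVec_mulVec, mul_eq_one_comm.mp hQ.1, one_mulVec]

lemma cross_so3 (Q : Mat3) (hQ : IsSO3 Q) (u v : Vec3) :
    cross (Q *ᵥ u) (Q *ᵥ v) = Q *ᵥ cross u v := by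
  have h := cross_poly Q u v
  rw [hQ.2, one_smul] at h
  rw [← h, mulmul Q hQ]

lemma hat_conj (Q : Mat3) (hQ : IsSO3 Q) (v : Vec3) :
    hat (Q *ᵥ v) * Q = Q * hat v := by
  have key : ∀ x : Vec3, (hat (Q *ᵥ v) * Q) *ᵥ x = (Q * hat v) *ᵥ x := by
    intro x
    rw [← mulVec_mulVec, hat_mulVec, cross_so3 Q hQ, ← hat_mulVec, mulVec_mulVec]
  ext i j
  have := congrFun (key (Pi.single j 1)) i
  simpa [mulVec_single] using this

lemma main_identity (Q : Mat3) (hQ : IsSO3 Q) (w π : Vec3) :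
    hat w * Q + hat (Q *ᵥ π) * Q = Q * hat (Qᵀ *ᵥ w + π) := by
  rw [hat_add, mul_add, ← hat_conj Q hQ (Qᵀ *ᵥ w), mulmul Q hQ, ← hat_conj Q hQ π]

/-- projected observer estimates satisfy R̂̇ = R̂(Ω̂+π̂)^×, Ω̂̇ = θ̂. -/
theorem observer_projection (R₀ : Mat3) (Ω₀ : Vec3) (hR₀ : IsSO3 R₀)
    (Q : ℝ → Mat3) (q πh θh : ℝ → Vec3)
    (hSO : ∀ t, IsSO3 (Q t))
    (hQ : ∀ t i j, HasDerivAt (fun s => Q s i j)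
      ((hat (Ω₀ + q t) * Q t + hat (Q t *ᵥ πh t) * Q t) i j) t)
    (hq : ∀ t i, HasDerivAt (fun s => q s i)
      ((hat (Q t *ᵥ πh t) *ᵥ (Ω₀ + q t) + Q t *ᵥ θh t) i) t) :
    (∀ t i j, HasDerivAt (fun s => (R₀ * Q s) i j)
      ((R₀ * Q t * hat ((Q t)ᵀ *ᵥ (Ω₀ + q t) + πh t)) i j) t) ∧
    (∀ t i, HasDerivAt (fun s => ((Q s)ᵀ *ᵥ (Ω₀ + q s)) i) (θh t i) t) := by
  constructor
  · intro t i j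
    set D : Mat3 := hat (Ω₀ + q t) * Q t + hat (Q t *ᵥ πh t) * Q t with hD
    have h1 : HasDerivAt (fun s => ∑ k, R₀ i k * Q s k j)
        (∑ k, R₀ i k * D k j) t :=
      HasDerivAt.fun_sum (fun k _ => (hQ t k j).const_mul (R₀ i k))
    have hfun : (fun s => (R₀ * Q s) i j) = fun s => ∑ k, R₀ i k * Q s k j := by
      funext s; simp [Matrix.mul_apply]
    have hval : (R₀ * Q t * hat ((Q t)ᵀ *ᵥ (Ω₀ + q t) + πh t)) i j
        = ∑ k, R₀ i k * D k j := by
      rw [Matrix.mul_assoc, ← main_identity (Q t) (hSO t), ← hD, Matrix.mul_apply]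
    rw [hfun, hval]
    exact h1
  · intro t i
    set w : Vec3 := Ω₀ + q t with hw
    set D : Mat3 := hat w * Q t + hat (Q t *ᵥ πh t) * Q t with hD
    set qd : Vec3 := hat (Q t *ᵥ πh t) *ᵥ w + Q t *ᵥ θh t with hqd
    have h1 : HasDerivAt (fun s => ∑ k, Q s k i * (Ω₀ k + q s k))
        (∑ k, (D k i * (Ω₀ k + q t k) + Q t k i * qd k)) t := by
      refine HasDerivAt.fun_sum (fun k _ => ?_)
      exact (hQ t k i).mul ((hq t k).const_add (Ω₀ k))
    have hfun : (fun s => ((Q s)ᵀ *ᵥ (Ω₀ + q s)) i)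
        = fun s => ∑ k, Q s k i * (Ω₀ k + q s k) := by
      funext s
      simp [mulVec, dotProduct, Matrix.transpose_apply, Pi.add_apply, mul_comm]
    have hval : (∑ k, (D k i * (Ω₀ k + q t k) + Q t k i * qd k)) = θh t i := by
      have : (∑ k, (D k i * (Ω₀ k + q t k) + Q t k i * qd k))
          = (Dᵀ *ᵥ w + (Q t)ᵀ *ᵥ qd) i := by
        simp [mulVec, dotProduct, Matrix.transpose_apply, Finset.sum_add_distrib,
          Pi.add_apply, hw, mul_comm]
      rw [this, hD, hqd]
      have hww : hat w *ᵥ w = 0 := by rw [hat_mulVec, crossSelf]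
      have hQQ : (Q t)ᵀ * Q t = 1 := (hSO t).1
      simp [Matrix.transpose_add, Matrix.transpose_mul, hat_transpose,
        Matrix.add_mulVec, Matrix.mulVec_add, Matrix.neg_mulVec, Matrix.mulVec_neg,
        ← Matrix.mulVec_mulVec, hww, hQQ, Matrix.one_mulVec]
      rw [Matrix.mulVec_mulVec, hQQ, Matrix.one_mulVec]
    rw [hfun]
    rw [← hval]
    exact h1
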